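/- arXiv:1810.01704 — 2 statements merged into one kernel-verified Lean document; each statement's English description precedes it below -/
import Mathlib

section
/- If A and B are Heyting algebras that satisfy the same L_HA-sentences (i.e. are elementarily equivalent as L_HA-structures), then h_{l,d}(A) = h_{l,d}(B) for all l, d ∈ ℕ, as elements of ℕ ∪ {∞}. -/
/-- Formal Heyting terms in `n` variables. -/
inductive HeytingTerm (n : ℕ) : Type
  | var : Fin n → HeytingTerm n
  | bot : HeytingTerm n
  | top : HeytingTerm n
  | inf : HeytingTerm n → HeytingTerm n → HeytingTerm n
  | sup : HeytingTerm n → HeytingTerm n → HeytingTerm n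
  | himp : HeytingTerm n → HeytingTerm n → HeytingTerm n

namespace HeytingTerm

/-- Evaluation of a Heyting term in a Heyting algebra. -/
def eval {n : ℕ} {H : Type*} [HeytingAlgebra H] (v : Fin n → H) : HeytingTerm n → H
  | var i => v i
  | bot => ⊥
  | top => ⊤
  | inf a b => a.eval v ⊓ b.eval v
  | sup a b => a.eval v ⊔ b.eval v
  | himp a b => a.eval v ⇨ b.eval v

/-- The degree of a Heyting term: the maximal number of nested occurrences of `⇨`. -/
def degree {n : ℕ} : HeytingTerm n → ℕ
  | var _ => 0
  | bot => 0
  | top => 0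
  | inf a b => max a.degree b.degree
  | sup a b => max a.degree b.degree
  | himp a b => max a.degree b.degree + 1

end HeytingTerm

/-- `b` is a solution of the system `(t, s₁, …, s_κ)` with parameters `a`. -/
def IsSolution {l m κ : ℕ} {H : Type*} [HeytingAlgebra H]
    (t : HeytingTerm (l + m)) (s : Fin κ → HeytingTerm (l + m))
    (a : Fin l → H) (b : Fin m → H) : Prop :=
  t.eval (Fin.append a b) = ⊤ ∧ ∀ k, (s k).eval (Fin.append a b) ≠ ⊤

/-- The system `(t, s₁, …, s_κ)` with parameters `a` has a solution in `H`. -/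
def HasSolution {l m κ : ℕ} {H : Type*} [HeytingAlgebra H]
    (t : HeytingTerm (l + m)) (s : Fin κ → HeytingTerm (l + m)) (a : Fin l → H) : Prop :=
  ∃ b : Fin m → H, IsSolution t s a b

/-- `a ≈ₙ a'`: the tuples satisfy the same equations `t = ⊤` for terms of degree `≤ n`. -/
def SimDeg {l : ℕ} {A : Type*} [HeytingAlgebra A] (n : ℕ) (a a' : Fin l → A) : Prop :=
  ∀ t : HeytingTerm l, t.degree ≤ n → (t.eval a = ⊤ ↔ t.eval a' = ⊤)

/-- `n` witnesses the `(l,d)`-index property for `A`: for all `a ≈ₙ a'` and every system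
of degree `≤ d` in `l` parameters and one unknown, `S(a,q)` is solvable in `A` iff
`S(a',q)` is. -/
def IndexProp (A : Type*) [HeytingAlgebra A] (l d n : ℕ) : Prop :=
  ∀ a a' : Fin l → A, SimDeg n a a' →
    ∀ (κ : ℕ) (t : HeytingTerm (l + 1)) (s : Fin κ → HeytingTerm (l + 1)),
      t.degree ≤ d → (∀ k, (s k).degree ≤ d) →
      (HasSolution t s a ↔ HasSolution t s a')

/-- The `(l,d)`-index `h_{l,d}(A) ∈ ℕ ∪ {∞}`: the least `n` satisfying `IndexProp A l d n`,
or `∞` if there is none. -/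
noncomputable def hIndex (A : Type*) [HeytingAlgebra A] (l d : ℕ) : ℕ∞ :=
  sInf {x : ℕ∞ | ∃ n : ℕ, x = ↑n ∧ IndexProp A l d n}

/-- The QE property: all the `(l,d)`-indices are finite. -/
def HasQEProp (A : Type*) [HeytingAlgebra A] : Prop :=
  ∀ l d : ℕ, hIndex A l d < ⊤

/-- The function symbols of the first-order language of Heyting algebras: two constants
(`⊥`, `⊤`) and three binary operations (`⊓`, `⊔`, `⇨`). -/
inductive LHAFunc : ℕ → Type
  | bot : LHAFunc 0
  | top : LHAFunc 0
  | inf : LHAFunc 2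
  | sup : LHAFunc 2
  | himp : LHAFunc 2

/-- The first-order language of Heyting algebras. -/
def LHA : FirstOrder.Language := ⟨LHAFunc, fun _ => Empty⟩

/-- Every Heyting algebra is an `LHA`-structure, interpreting the symbols by the
Heyting operations. -/
instance LHA.structure (H : Type*) [HeytingAlgebra H] : LHA.Structure H where
  funMap {_} f x :=
    match f with
    | .bot => ⊥
    | .top => ⊤
    | .inf => x 0 ⊓ x 1
    | .sup => x 0 ⊔ x 1
    | .himp => x 0 ⇨ x 1
  RelMap {_} r := Empty.elim r

/-!
Up to equality in all Heyting algebras there are only finitely many terms of degree `≤ n` in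
`l` variables: by induction on `n`, each is a join of meets of variables, `⊥`, `⊤` and
implications between the finitely many representatives of degree `≤ n - 1`. Hence `a ≈ₙ a'` is
expressed by a single first-order formula, and `IndexProp A l d n` says that `A` satisfies one
`L_HA`-sentence per system of degree `≤ d`; elementarily equivalent algebras satisfy the same
such sentences.
-/

open FirstOrder Language

universe u

namespace HeytingTerm

variable {l : ℕ}

noncomputable instance : DecidableEq (HeytingTerm l) := Classical.decEq _

def SemEq (t t' : HeytingTerm l) : Prop :=
  ∀ (H : Type u) [HeytingAlgebra H] (v : Fin l → H), t.eval v = t'.eval v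

noncomputable def finsetSup (S : Finset (HeytingTerm l)) : HeytingTerm l :=
  S.toList.foldr .sup .bot

noncomputable def finsetInf (S : Finset (HeytingTerm l)) : HeytingTerm l :=
  S.toList.foldr .inf .top

section Eval

variable {H : Type*} [HeytingAlgebra H] (v : Fin l → H)

lemma eval_finsetSup (S : Finset (HeytingTerm l)) : (finsetSup S).eval v = S.sup (eval v) := by
  rw [finsetSup, Finset.sup_def, ← Finset.coe_toList S, Multiset.map_coe, Multiset.sup_coe]
  induction S.toList <;> simp_all [eval]

lemma eval_finsetInf (S : Finset (HeytingTerm l)) : (finsetInf S).eval v = S.inf (eval v) := by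
  rw [finsetInf, Finset.inf_def, ← Finset.coe_toList S, Multiset.map_coe, Multiset.inf_coe]
  induction S.toList <;> simp_all [eval]

end Eval

lemma degree_finsetSup_le {S : Finset (HeytingTerm l)} {n : ℕ} (h : ∀ t ∈ S, t.degree ≤ n) :
    (finsetSup S).degree ≤ n := by
  simp_rw [← Finset.mem_toList] at h
  rw [finsetSup]
  generalize S.toList = L at h
  induction L <;> simp_all [degree]

lemma degree_finsetInf_le {S : Finset (HeytingTerm l)} {n : ℕ} (h : ∀ t ∈ S, t.degree ≤ n) :
    (finsetInf S).degree ≤ n := by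
  simp_rw [← Finset.mem_toList] at h
  rw [finsetInf]
  generalize S.toList = L at h
  induction L <;> simp_all [degree]

noncomputable def joinOfMeets (𝒮 : Finset (Finset (HeytingTerm l))) : HeytingTerm l :=
  finsetSup (𝒮.image finsetInf)

lemma eval_joinOfMeets {H : Type*} [HeytingAlgebra H] (v : Fin l → H)
    (𝒮 : Finset (Finset (HeytingTerm l))) :
    (joinOfMeets 𝒮).eval v = 𝒮.sup fun S => S.inf (eval v) := by
  simp [joinOfMeets, eval_finsetSup, Finset.sup_image, Function.comp_def, eval_finsetInf]

def LatticeGenerated (G : Finset (HeytingTerm l)) (t : HeytingTerm l) : Prop :=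
  ∃ 𝒮 ⊆ G.powerset, SemEq.{u} t (joinOfMeets 𝒮)

namespace LatticeGenerated

variable {G : Finset (HeytingTerm l)} {t t' : HeytingTerm l}

lemma of_mem (h : t ∈ G) : LatticeGenerated.{u} G t :=
  ⟨{{t}}, by simpa using h, fun H _ v => by simp [eval_joinOfMeets]⟩

lemma bot : LatticeGenerated.{u} G .bot :=
  ⟨∅, by simp, fun H _ v => by simp [eval_joinOfMeets, eval]⟩

lemma top : LatticeGenerated.{u} G .top :=
  ⟨{∅}, by simp, fun H _ v => by simp [eval_joinOfMeets, eval]⟩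

lemma sup (ht : LatticeGenerated.{u} G t) (ht' : LatticeGenerated.{u} G t') :
    LatticeGenerated.{u} G (t.sup t') := by
  obtain ⟨𝒮, h𝒮, ht⟩ := ht
  obtain ⟨𝒯, h𝒯, ht'⟩ := ht'
  refine ⟨𝒮 ∪ 𝒯, Finset.union_subset h𝒮 h𝒯, fun H _ v => ?_⟩
  simp only [eval, ht H v, ht' H v, eval_joinOfMeets, Finset.sup_union]

lemma inf (ht : LatticeGenerated.{u} G t) (ht' : LatticeGenerated.{u} G t') :
    LatticeGenerated.{u} G (t.inf t') := by
  obtain ⟨𝒮, h𝒮, ht⟩ := ht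
  obtain ⟨𝒯, h𝒯, ht'⟩ := ht'
  refine ⟨Finset.image₂ (· ∪ ·) 𝒮 𝒯, ?_, fun H _ v => ?_⟩
  · intro S hS
    obtain ⟨S₁, hS₁, S₂, hS₂, rfl⟩ := Finset.mem_image₂.1 hS
    exact Finset.mem_powerset.2 (Finset.union_subset
      (Finset.mem_powerset.1 (h𝒮 hS₁)) (Finset.mem_powerset.1 (h𝒯 hS₂)))
  · simp only [eval, ht H v, ht' H v, eval_joinOfMeets, Finset.sup_inf_sup,
      ← Finset.image_uncurry_product, Finset.sup_image]
    exact Finset.sup_congr rfl fun p _ => (Finset.inf_union).symm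

lemma of_semEq (h : SemEq.{u} t t') (ht' : LatticeGenerated.{u} G t') :
    LatticeGenerated.{u} G t :=
  let ⟨𝒮, h𝒮, ht'⟩ := ht'
  ⟨𝒮, h𝒮, fun H _ v => (h H v).trans (ht' H v)⟩

end LatticeGenerated

noncomputable def joinsOfMeets (G : Finset (HeytingTerm l)) : Finset (HeytingTerm l) :=
  G.powerset.powerset.image joinOfMeets

lemma LatticeGenerated.exists_mem_joinsOfMeets {G : Finset (HeytingTerm l)} {t : HeytingTerm l}
    (h : LatticeGenerated.{u} G t) : ∃ t' ∈ joinsOfMeets G, SemEq.{u} t t' := by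
  obtain ⟨𝒮, h𝒮, ht⟩ := h
  exact ⟨joinOfMeets 𝒮, Finset.mem_image_of_mem _ (Finset.mem_powerset.2 h𝒮), ht⟩

lemma degree_le_of_mem_joinsOfMeets {G : Finset (HeytingTerm l)} {n : ℕ}
    (hG : ∀ t ∈ G, t.degree ≤ n) {t : HeytingTerm l} (ht : t ∈ joinsOfMeets G) :
    t.degree ≤ n := by
  obtain ⟨𝒮, h𝒮, rfl⟩ := Finset.mem_image.1 ht
  refine degree_finsetSup_le fun s hs => ?_
  obtain ⟨S, hS, rfl⟩ := Finset.mem_image.1 hs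
  exact degree_finsetInf_le fun t ht =>
    hG t (Finset.mem_powerset.1 (Finset.mem_powerset.1 h𝒮 hS) ht)

noncomputable def atoms (l : ℕ) : Finset (HeytingTerm l) :=
  insert .bot (insert .top (Finset.univ.image var))

noncomputable def generators (l : ℕ) : ℕ → Finset (HeytingTerm l)
  | 0 => atoms l
  | n + 1 => atoms l ∪ Finset.image₂ himp (joinsOfMeets (generators l n))
      (joinsOfMeets (generators l n))

noncomputable def representatives (l n : ℕ) : Finset (HeytingTerm l) :=
  joinsOfMeets (generators l n)

lemma degree_eq_zero_of_mem_atoms {t : HeytingTerm l} (ht : t ∈ atoms l) : t.degree = 0 := by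
  simp only [atoms, Finset.mem_insert, Finset.mem_image] at ht
  rcases ht with rfl | rfl | ⟨i, -, rfl⟩ <;> rfl

lemma degree_le_of_mem_generators {n : ℕ} {t : HeytingTerm l} (ht : t ∈ generators l n) :
    t.degree ≤ n := by
  induction n generalizing t with
  | zero => exact (degree_eq_zero_of_mem_atoms ht).le
  | succ n ih =>
    rcases Finset.mem_union.1 ht with ht | ht
    · simp [degree_eq_zero_of_mem_atoms ht]
    · obtain ⟨a, ha, b, hb, rfl⟩ := Finset.mem_image₂.1 ht
      have := degree_le_of_mem_joinsOfMeets (fun _ => ih) ha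
      have := degree_le_of_mem_joinsOfMeets (fun _ => ih) hb
      simp only [degree]
      omega

lemma degree_le_of_mem_representatives {n : ℕ} {t : HeytingTerm l}
    (ht : t ∈ representatives l n) : t.degree ≤ n :=
  degree_le_of_mem_joinsOfMeets (fun _ => degree_le_of_mem_generators) ht

lemma LatticeGenerated.of_degree_le {G : Finset (HeytingTerm l)} {n : ℕ} (hG : atoms l ⊆ G)
    (himp_mem : ∀ a b : HeytingTerm l, (himp a b).degree ≤ n → LatticeGenerated.{u} G (himp a b))
    (t : HeytingTerm l) (ht : t.degree ≤ n) : LatticeGenerated.{u} G t := by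
  induction t with
  | var i => exact of_mem (hG (by simp [atoms]))
  | bot => exact bot
  | top => exact top
  | inf a b iha ihb =>
    rw [degree, max_le_iff] at ht
    exact (iha ht.1).inf (ihb ht.2)
  | sup a b iha ihb =>
    rw [degree, max_le_iff] at ht
    exact (iha ht.1).sup (ihb ht.2)
  | himp a b => exact himp_mem a b ht

lemma latticeGenerated_generators {n : ℕ} {t : HeytingTerm l} (ht : t.degree ≤ n) :
    LatticeGenerated.{u} (generators l n) t := by
  induction n generalizing t with
  | zero => exact .of_degree_le subset_rfl (fun a b h => by simp [degree] at h) t ht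
  | succ n ih =>
    refine .of_degree_le Finset.subset_union_left (fun a b h => ?_) t ht
    rw [degree, Nat.add_le_add_iff_right, max_le_iff] at h
    obtain ⟨a', ha', haa'⟩ := (ih h.1).exists_mem_joinsOfMeets
    obtain ⟨b', hb', hbb'⟩ := (ih h.2).exists_mem_joinsOfMeets
    refine .of_semEq (t' := himp a' b') (fun H _ v => by simp [eval, haa' H v, hbb' H v]) ?_
    exact .of_mem (Finset.mem_union_right _ (Finset.mem_image₂_of_mem ha' hb'))

lemma exists_mem_representatives_semEq {n : ℕ} {t : HeytingTerm l} (ht : t.degree ≤ n) :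
    ∃ t' ∈ representatives l n, SemEq.{u} t t' :=
  (latticeGenerated_generators ht).exists_mem_joinsOfMeets

lemma simDeg_iff_representatives {H : Type u} [HeytingAlgebra H] {n : ℕ} {a a' : Fin l → H} :
    SimDeg n a a' ↔ ∀ t ∈ representatives l n, (t.eval a = ⊤ ↔ t.eval a' = ⊤) := by
  refine ⟨fun h t ht => h t (degree_le_of_mem_representatives ht), fun h t ht => ?_⟩
  obtain ⟨t', ht', htt'⟩ := exists_mem_representatives_semEq.{u} ht
  rw [htt' H a, htt' H a']
  exact h t' ht'

def toTerm {m : ℕ} : HeytingTerm m → LHA.Term (Fin m)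
  | var i => Term.var i
  | bot => Term.func LHAFunc.bot ![]
  | top => Term.func LHAFunc.top ![]
  | inf a b => Term.func LHAFunc.inf ![a.toTerm, b.toTerm]
  | sup a b => Term.func LHAFunc.sup ![a.toTerm, b.toTerm]
  | himp a b => Term.func LHAFunc.himp ![a.toTerm, b.toTerm]

@[simp]
lemma realize_toTerm {m : ℕ} {H : Type*} [HeytingAlgebra H] (v : Fin m → H) (t : HeytingTerm m) :
    t.toTerm.realize v = t.eval v := by
  induction t with
  | var | bot | top => rfl
  | inf a b iha ihb | sup a b iha ihb | himp a b iha ihb => rw [eval, ← iha, ← ihb]; rfl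

def eqTopFormula {m : ℕ} (t : HeytingTerm m) : LHA.Formula (Fin m) :=
  t.toTerm.equal top.toTerm

@[simp]
lemma realize_eqTopFormula {m : ℕ} {H : Type*} [HeytingAlgebra H] (t : HeytingTerm m)
    (v : Fin m → H) : t.eqTopFormula.Realize v ↔ t.eval v = ⊤ := by
  simp [eqTopFormula, eval]

noncomputable def solvableFormula {κ : ℕ} (t : HeytingTerm (l + 1))
    (s : Fin κ → HeytingTerm (l + 1)) : LHA.Formula (Fin l) :=
  Formula.iExs (Fin 1) <| Formula.relabel finSumFinEquiv.symm <|
    t.eqTopFormula ⊓ Formula.iInf fun k => ∼(s k).eqTopFormula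

lemma realize_solvableFormula {κ : ℕ} {H : Type*} [HeytingAlgebra H] (t : HeytingTerm (l + 1))
    (s : Fin κ → HeytingTerm (l + 1)) (v : Fin l → H) :
    (solvableFormula t s).Realize v ↔ HasSolution t s v := by
  have append_eq (b : Fin 1 → H) : Sum.elim v b ∘ finSumFinEquiv.symm = Fin.append v b := by
    ext i
    refine Fin.addCases (fun i => ?_) (fun i => ?_) i <;> simp
  simp [solvableFormula, append_eq, HasSolution, IsSolution]

noncomputable def simDegFormula (l n : ℕ) : LHA.Formula (Fin l ⊕ Fin l) :=
  Formula.iInf fun t : representatives l n =>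
    (t.1.eqTopFormula.relabel Sum.inl).iff (t.1.eqTopFormula.relabel Sum.inr)

lemma realize_simDegFormula {H : Type u} [HeytingAlgebra H] {n : ℕ} (a a' : Fin l → H) :
    (simDegFormula l n).Realize (Sum.elim a a') ↔ SimDeg n a a' := by
  simp [simDegFormula, simDeg_iff_representatives]

noncomputable def indexSentence (l n : ℕ) {κ : ℕ} (t : HeytingTerm (l + 1))
    (s : Fin κ → HeytingTerm (l + 1)) : LHA.Sentence :=
  Formula.iAlls (Fin l ⊕ Fin l) <| Formula.relabel Sum.inr <|
    (simDegFormula l n).imp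
      (((solvableFormula t s).relabel Sum.inl).iff ((solvableFormula t s).relabel Sum.inr))

lemma realize_indexSentence {H : Type u} [HeytingAlgebra H] {n κ : ℕ} (t : HeytingTerm (l + 1))
    (s : Fin κ → HeytingTerm (l + 1)) :
    H ⊨ indexSentence l n t s ↔
      ∀ a a' : Fin l → H, SimDeg n a a' → (HasSolution t s a ↔ HasSolution t s a') := by
  simp only [indexSentence, Sentence.Realize, Formula.realize_iAlls, Formula.realize_relabel,
    Formula.realize_imp, Formula.realize_iff]
  refine ⟨fun h a a' => ?_, fun h i => ?_⟩
  · simpa [Function.comp_def, realize_simDegFormula, realize_solvableFormula]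
      using h (Sum.elim a a')
  · rw [← Sum.elim_comp_inl_inr i]
    simpa [Function.comp_def, realize_simDegFormula, realize_solvableFormula] using h _ _

lemma indexProp_iff_forall_realize_indexSentence (H : Type u) [HeytingAlgebra H] (l d n : ℕ) :
    IndexProp H l d n ↔ ∀ (κ : ℕ) (t : HeytingTerm (l + 1)) (s : Fin κ → HeytingTerm (l + 1)),
      t.degree ≤ d → (∀ k, (s k).degree ≤ d) → H ⊨ indexSentence l n t s := by
  simp only [realize_indexSentence, IndexProp]
  exact ⟨fun h κ t s ht hs a a' hsim => h a a' hsim κ t s ht hs,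
    fun h a a' hsim κ t s ht hs => h κ t s ht hs a a' hsim⟩

end HeytingTerm

lemma FirstOrder.Language.ElementarilyEquivalent.indexProp_iff {A B : Type*}
    [HeytingAlgebra A] [HeytingAlgebra B] (h : A ≅[LHA] B) (l d n : ℕ) :
    IndexProp A l d n ↔ IndexProp B l d n := by
  simp only [HeytingTerm.indexProp_iff_forall_realize_indexSentence, h.realize_sentence]

open FirstOrder in
/-- Elementarily equivalent Heyting algebras have the same `(l,d)`-indices. -/
theorem hIndex_eq_of_elementarilyEquivalent (A : Type*) (B : Type*)
    [HeytingAlgebra A] [HeytingAlgebra B] (h : A ≅[LHA] B) (l d : ℕ) :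
    hIndex A l d = hIndex B l d := by
  simp only [hIndex, h.indexProp_iff]
end

section
/- (Finite Extension Property) Let A be a finite Heyting algebra, ā ∈ A^l, and let S(p̄,q̄) be a system in l parameters and m unknowns. If there exists an extension f : A → K of Heyting algebras such that S(f(ā),q̄) has a solution in K, then there exist a finite Heyting algebra K′ and an injective Heyting-algebra homomorphism g : A → K′ such that S(g(ā),q̄) has a solution in K′. -/
universe u v

open Function

section Embedding

variable {F H K : Type*}

theorem le_of_map_le_map_of_injective [Lattice H] [Lattice K] [FunLike F H K] [InfHomClass F H K]
    (φ : F) (hφ : Injective φ) {a b : H} (h : φ a ≤ φ b) : a ≤ b :=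
  inf_eq_left.1 <| hφ <| by rw [map_inf, inf_eq_left.2 h]

variable [HeytingAlgebra H] [HeytingAlgebra K] [FunLike F H K]

theorem map_himp_of_mem_range [InfHomClass F H K] (φ : F) (hφ : Injective φ) {x y : H}
    (h : φ x ⇨ φ y ∈ Set.range φ) : φ (x ⇨ y) = φ x ⇨ φ y := by
  obtain ⟨z, hz⟩ := h
  refine le_antisymm (le_himp_iff.2 ?_) (hz ▸ OrderHomClass.mono φ ?_)
  · rw [← map_inf]
    exact OrderHomClass.mono φ himp_inf_le
  · refine le_himp_iff.2 (le_of_map_le_map_of_injective φ hφ ?_)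
    rw [map_inf, hz]
    exact himp_inf_le

end Embedding

namespace HeytingTerm

variable {n : ℕ}

def subterms : HeytingTerm n → List (HeytingTerm n)
  | var i => [var i]
  | bot => [bot]
  | top => [top]
  | inf a b => inf a b :: (a.subterms ++ b.subterms)
  | sup a b => sup a b :: (a.subterms ++ b.subterms)
  | himp a b => himp a b :: (a.subterms ++ b.subterms)

variable {F H K : Type*} [HeytingAlgebra H] [HeytingAlgebra K] [FunLike F H K]

theorem map_eval_of_subterms_mem_range [BoundedLatticeHomClass F H K] (φ : F)
    (hφ : Injective φ) (v : Fin n → H) (u : HeytingTerm n)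
    (hu : ∀ w ∈ u.subterms, w.eval (φ ∘ v) ∈ Set.range φ) :
    φ (u.eval v) = u.eval (φ ∘ v) := by
  induction u with
  | var i => rfl
  | bot => exact map_bot φ
  | top => exact map_top φ
  | inf a b iha ihb =>
    simp only [subterms, List.forall_mem_cons, List.forall_mem_append] at hu
    exact (map_inf φ _ _).trans (congrArg₂ (· ⊓ ·) (iha hu.2.1) (ihb hu.2.2))
  | sup a b iha ihb =>
    simp only [subterms, List.forall_mem_cons, List.forall_mem_append] at hu
    exact (map_sup φ _ _).trans (congrArg₂ (· ⊔ ·) (iha hu.2.1) (ihb hu.2.2))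
  | himp a b iha ihb =>
    simp only [subterms, List.forall_mem_cons, List.forall_mem_append] at hu
    obtain ⟨hself, ha, hb⟩ := hu
    simp only [eval, ← iha ha, ← ihb hb] at hself ⊢
    exact map_himp_of_mem_range φ hφ hself

end HeytingTerm

theorem Fin.comp_append {α β : Type*} {m n : ℕ} (f : α → β) (a : Fin m → α) (b : Fin n → α) :
    f ∘ Fin.append a b = Fin.append (f ∘ a) (f ∘ b) := by
  funext i
  refine Fin.addCases (fun j => ?_) (fun j => ?_) i <;> simp

section Solutions

variable {l m κ : ℕ} {F H K : Type*} [HeytingAlgebra H] [HeytingAlgebra K] [FunLike F H K]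
  {t : HeytingTerm (l + m)} {s : Fin κ → HeytingTerm (l + m)} {a : Fin l → H} {b : Fin m → H}

theorem IsSolution.of_map [BoundedLatticeHomClass F H K] (φ : F) (hφ : Injective φ)
    (hsub : ∀ w ∈ (t :: List.ofFn s).flatMap HeytingTerm.subterms,
      w.eval (Fin.append (φ ∘ a) (φ ∘ b)) ∈ Set.range φ)
    (h : IsSolution t s (φ ∘ a) (φ ∘ b)) : IsSolution t s a b := by
  obtain ⟨ht, hs⟩ := h
  rw [← Fin.comp_append] at ht hs hsub
  have hmap (u) (hu : u ∈ t :: List.ofFn s) :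
      φ (u.eval (Fin.append a b)) = u.eval (φ ∘ Fin.append a b) :=
    HeytingTerm.map_eval_of_subterms_mem_range φ hφ _ u fun w hw =>
      hsub w (List.mem_flatMap.2 ⟨u, hu, hw⟩)
  refine ⟨hφ ?_, fun k hk => hs k ?_⟩
  · rw [hmap t List.mem_cons_self, ht, map_top]
  · rw [← hmap (s k) (List.mem_cons_of_mem _ (List.mem_ofFn.2 ⟨k, rfl⟩)), hk, map_top]

end Solutions

theorem exists_heytingHom_comp_eq {A F H K : Type*} [HeytingAlgebra A] [HeytingAlgebra H]
    [HeytingAlgebra K] [FunLike F H K] [BoundedLatticeHomClass F H K] (φ : F)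
    (hφ : Injective φ) (f : HeytingHom A K) (hf : Set.range f ⊆ Set.range φ) :
    ∃ g : HeytingHom A H, φ ∘ g = f := by
  obtain ⟨g, hg⟩ := Set.range_subset_range_iff_exists_comp.1 hf
  have hφg (x : A) : φ (g x) = f x := (congrFun hg x).symm
  have hhimp (x y : A) : φ (g x) ⇨ φ (g y) ∈ Set.range φ := by
    rw [hφg, hφg, ← map_himp]
    exact hf ⟨_, rfl⟩
  refine ⟨{ toFun := g
            map_sup' := fun x y => hφ ?_
            map_inf' := fun x y => hφ ?_
            map_bot' := hφ ?_
            map_himp' := fun x y => hφ ?_ }, hg.symm⟩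
  · rw [map_sup, hφg, hφg, hφg, map_sup]
  · rw [map_inf, hφg, hφg, hφg, map_inf]
  · rw [map_bot, hφg, map_bot]
  · rw [map_himp_of_mem_range φ hφ (hhimp x y), hφg, hφg, hφg, map_himp]

theorem exists_heytingAlgebra_orderIso_of_small (H : Type u) [HeytingAlgebra H] [Small.{v} H] :
    ∃ (H' : Type v) (_ : HeytingAlgebra H'), Nonempty (H' ≃o H) := by
  let e : Shrink.{v} H ≃ H := (equivShrink H).symm
  let _ : Max (Shrink H) := ⟨fun x y => e.symm (e x ⊔ e y)⟩
  let _ : Min (Shrink H) := ⟨fun x y => e.symm (e x ⊓ e y)⟩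
  let _ : Top (Shrink H) := ⟨e.symm ⊤⟩
  let _ : Bot (Shrink H) := ⟨e.symm ⊥⟩
  let _ : Compl (Shrink H) := ⟨fun x => e.symm (e x)ᶜ⟩
  let _ : HImp (Shrink H) := ⟨fun x y => e.symm (e x ⇨ e y)⟩
  let _ : LE (Shrink H) := ⟨fun x y => e x ≤ e y⟩
  let _ : LT (Shrink H) := ⟨fun x y => e x < e y⟩
  let _ : HeytingAlgebra (Shrink H) := e.injective.heytingAlgebra e Iff.rfl Iff.rfl
    (fun _ _ => e.apply_symm_apply _) (fun _ _ => e.apply_symm_apply _) (e.apply_symm_apply _)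
    (e.apply_symm_apply _) (fun _ => e.apply_symm_apply _) (fun _ _ => e.apply_symm_apply _)
  exact ⟨Shrink H, inferInstance, ⟨{ toEquiv := e, map_rel_iff' := Iff.rfl }⟩⟩

theorem exists_finite_heytingAlgebra_embedding {K : Type u} [DistribLattice K] [BoundedOrder K]
    {G : Set K} (hG : G.Finite) :
    ∃ (H : Type v) (_ : HeytingAlgebra H) (_ : Finite H) (φ : BoundedLatticeHom H K),
      Injective φ ∧ G ⊆ Set.range φ := by
  let L : Sublattice K :=
    ⟨latticeClosure (insert ⊥ (insert ⊤ G)), isSublattice_latticeClosure.1,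
      isSublattice_latticeClosure.2⟩
  have hmem {x : K} (hx : x ∈ insert ⊥ (insert ⊤ G)) : x ∈ L := subset_latticeClosure hx
  have : Finite L := ((hG.insert ⊤).insert ⊥).latticeClosure.to_subtype
  let _ : BoundedOrder L :=
    { top := ⟨⊤, hmem (by simp)⟩
      le_top x := le_top (a := (x : K))
      bot := ⟨⊥, hmem (by simp)⟩
      bot_le x := bot_le (a := (x : K)) }
  let _ := Fintype.ofFinite L
  let _ := Fintype.toCompleteDistribLattice L
  let ι : BoundedLatticeHom L K := { L.subtype with map_top' := rfl, map_bot' := rfl }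
  obtain ⟨H, _, ⟨e⟩⟩ := exists_heytingAlgebra_orderIso_of_small.{u, v} L
  refine ⟨H, inferInstance, e.finite_iff.2 inferInstance, ι.comp e,
    Subtype.val_injective.comp e.injective, fun x hx => ⟨e.symm ⟨x, hmem (by simp [hx])⟩, ?_⟩⟩
  exact congrArg Subtype.val (e.apply_symm_apply _)

/-- Finite Extension Property: a system with parameters in a finite Heyting algebra `A`
which is solvable in some extension of `A` is solvable in a finite extension of `A`. -/
theorem finite_extension_property {l m κ : ℕ} (A : Type*) [HeytingAlgebra A] [Finite A]
    (a : Fin l → A) (t : HeytingTerm (l + m)) (s : Fin κ → HeytingTerm (l + m))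
    (K : Type*) [HeytingAlgebra K] (f : HeytingHom A K) (hf : Function.Injective f)
    (hsol : HasSolution t s (fun i => f (a i))) :
    ∃ (K' : Type) (inst : HeytingAlgebra K'),
      letI := inst
      Finite K' ∧ ∃ g : HeytingHom A K',
        Function.Injective g ∧ HasSolution t s (fun i => g (a i)) := by
  obtain ⟨b, hb⟩ := hsol
  let subterms := (t :: List.ofFn s).flatMap HeytingTerm.subterms
  let values : Set K := (·.eval (Fin.append (f ∘ a) b)) '' {w | w ∈ subterms}
  have hfin : (Set.range f ∪ Set.range b ∪ values).Finite :=
    ((Set.finite_range f).union (Set.finite_range b)).union ((List.finite_toSet _).image _)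
  obtain ⟨H, _, _, φ, hφ, hrange⟩ := exists_finite_heytingAlgebra_embedding.{_, 0} hfin
  obtain ⟨g, hg⟩ := exists_heytingHom_comp_eq φ hφ f fun x hx => hrange (.inl (.inl hx))
  obtain ⟨b', rfl⟩ := Set.range_subset_range_iff_exists_comp.1 fun x hx => hrange (.inl (.inr hx))
  have hfa : f ∘ a = φ ∘ (g ∘ a) := by rw [← hg]; rfl
  refine ⟨H, inferInstance, inferInstance, g, Injective.of_comp (hg ▸ hf), b', ?_⟩
  refine IsSolution.of_map φ hφ (fun w hw => ?_) (hfa ▸ hb)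
  exact hfa ▸ hrange (.inr ⟨w, hw, rfl⟩)
end
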